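/- Let n ≥ 4 and p, q ≥ 1 be integers, let X₁,…,X_n ∈ ℝᵖ and Y₁,…,Y_n ∈ ℝ^q, and let τ_X > 0, τ_Y > 0, τ = τ_X·τ_Y. Let L_X be the symmetric n×n matrix with zero diagonal and off-diagonal entries (‖X_s−X_t‖² − τ_X²)/τ_X², and let L_Y be the symmetric n×n matrix with zero diagonal and off-diagonal entries (‖Y_s−Y_t‖² − τ_Y²)/τ_Y², where ‖·‖ is the Euclidean norm. Writing x_{si} for the i-th coordinate of X_s and y_{sj} for the j-th coordinate of Y_s, one has (1/4)·(L̃_X·L̃_Y) = (1/τ²)·Σ_{i=1}^p Σ_{j=1}^q cov_n²((x_{1i},…,x_{ni}), (y_{1j},…,y_{nj})). -/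

import Mathlib

/-!
Write `P_x` for the off-diagonal part of `x xᵀ`. Since
`‖X_s − X_t‖² = ‖X_s‖² + ‖X_t‖² − 2 Σ_i x_{si} x_{ti}` and U-centering annihilates every
zero-diagonal matrix with off-diagonal entries `α_s + α_t + c`, one gets
`L̃_X = −(2/τ_X²) Σ_i P̃_{x_i}`, and by bilinearity it suffices to prove
`(P̃_x·P̃_y) = cov_n²(x,y)`.

A U-centered matrix `B̃` has zero row and column sums, so
`Σ_{s≠t} ã_{st} b̃_{st} = Σ_{s≠t} a_{st} b̃_{st}`, and summing `b_{st} − b_{su} − b_{tv} + b_{uv}`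
over the distinct `u, v ∉ {s, t}` gives `(n−1)(n−2) b̃_{st}`. Hence
`n(n−1)(n−2)(n−3)·(P̃_x·P̃_y)` is the sum over injective quadruples of
`x_s x_t (y_s − y_v)(y_t − y_u)`. Up to relabelling the quadruple this kernel is a quarter of
`(x_s − x_t)(y_s − y_t)(x_u − x_v)(y_u − y_v)`, and the sum of the symmetrized kernel `h` over
`s < t < u < v` is `1/4!` times the sum of the unsymmetrized one over all injective quadruples.
-/
open Finset Matrix

/-- The `𝒰`-centered version `Ã` of an `n × n` real matrix `A`:
`ã_{st} = a_{st} − (1/(n−2))·Σ_v a_{sv} − (1/(n−2))·Σ_u a_{ut}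
          + (1/((n−1)(n−2)))·Σ_{u,v} a_{uv}` for `s ≠ t`, and `ã_{ss} = 0`. -/
noncomputable def uCenter {n : ℕ} (A : Matrix (Fin n) (Fin n) ℝ) :
    Matrix (Fin n) (Fin n) ℝ := fun s t =>
  if s = t then 0 else
    A s t - (∑ v, A s v) / ((n : ℝ) - 2) - (∑ u, A u t) / ((n : ℝ) - 2)
      + (∑ u, ∑ v, A u v) / (((n : ℝ) - 1) * ((n : ℝ) - 2))


/-- The inner product of the `𝒰`-centered versions of two `n × n` matrices:
`(Ã·B̃) := (1/(n(n−3)))·Σ_{s≠t} ã_{st}·b̃_{st}`. -/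
noncomputable def uInner {n : ℕ} (A B : Matrix (Fin n) (Fin n) ℝ) : ℝ :=
  (∑ s, ∑ t, if s ≠ t then uCenter A s t * uCenter B s t else 0)
    / ((n : ℝ) * ((n : ℝ) - 3))

/-- The symmetrized kernel `h` of the fourth-order `𝒰`-statistic `cov_n²`: the average over
all `4!` permutations `(s′,t′,u′,v′)` of `(s,t,u,v)` of
`(1/4)·(x_{s′}−x_{t′})(y_{s′}−y_{t′})(x_{u′}−x_{v′})(y_{u′}−y_{v′})`. -/
noncomputable def hKernel {n : ℕ} (x y : Fin n → ℝ) (s t u v : Fin n) : ℝ :=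
  (1 / (Nat.factorial 4 : ℝ)) * ∑ σ : Equiv.Perm (Fin 4),
    (1 / 4 : ℝ) * (x (![s, t, u, v] (σ 0)) - x (![s, t, u, v] (σ 1)))
      * (y (![s, t, u, v] (σ 0)) - y (![s, t, u, v] (σ 1)))
      * (x (![s, t, u, v] (σ 2)) - x (![s, t, u, v] (σ 3)))
      * (y (![s, t, u, v] (σ 2)) - y (![s, t, u, v] (σ 3)))

/-- The fourth-order `𝒰`-statistic `cov_n²(x,y) = (1/C(n,4))·Σ_{s<t<u<v} h(s,t,u,v)`,
an unbiased estimator of the squared covariance. -/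
noncomputable def covnSq {n : ℕ} (x y : Fin n → ℝ) : ℝ :=
  (∑ s, ∑ t, ∑ u, ∑ v,
    if s < t ∧ t < u ∧ u < v then hKernel x y s t u v else 0) / (n.choose 4 : ℝ)

open Function

section FiniteSums

variable {α M : Type*} [Fintype α]

theorem sum_comm_pairs {β γ δ : Type*} [Fintype β] [Fintype γ] [Fintype δ] [AddCommMonoid M]
    (F : α → β → γ → δ → M) :
    ∑ a, ∑ b, ∑ c, ∑ d, F a b c d = ∑ c, ∑ d, ∑ a, ∑ b, F a b c d :=
  calc ∑ a, ∑ b, ∑ c, ∑ d, F a b c d = ∑ a, ∑ c, ∑ b, ∑ d, F a b c d :=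
        sum_congr rfl fun _ _ => sum_comm
    _ = ∑ c, ∑ a, ∑ b, ∑ d, F a b c d := sum_comm
    _ = ∑ c, ∑ a, ∑ d, ∑ b, F a b c d :=
        sum_congr rfl fun _ _ => sum_congr rfl fun _ _ => sum_comm
    _ = ∑ c, ∑ d, ∑ a, ∑ b, F a b c d := sum_congr rfl fun _ _ => sum_comm

theorem sum_compl_pair [DecidableEq α] [AddCommGroup M] (f : α → M) {a b : α} (hab : a ≠ b) :
    ∑ v ∈ {a, b}ᶜ, f v = ∑ v, f v - f a - f b := by
  rw [sub_sub, eq_sub_iff_add_eq, ← sum_pair hab, sum_compl_add_sum]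

theorem sum_compl_triple [DecidableEq α] [AddCommGroup M] (f : α → M) {a b c : α}
    (hab : a ≠ b) (hac : a ≠ c) (hbc : b ≠ c) :
    ∑ v ∈ {a, b, c}ᶜ, f v = ∑ v, f v - f a - f b - f c := by
  rw [sub_sub, sub_sub, eq_sub_iff_add_eq, ← sum_pair hbc, ← sum_insert (by simp [hab, hac]),
    sum_compl_add_sum]

theorem Matrix.IsSymm.sum_apply_left [AddCommMonoid M] {A : Matrix α α M} (hA : A.IsSymm)
    (t : α) : ∑ u, A u t = ∑ v, A t v :=
  sum_congr rfl fun u _ => hA.apply t u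

end FiniteSums

theorem cast_choose_four (n : ℕ) :
    (n.choose 4 : ℝ) = n * (n - 1) * (n - 2) * (n - 3) / 24 := by
  rw [Nat.cast_choose_eq_descPochhammer_div]
  simp [descPochhammer_succ_eval, Nat.factorial]

section Tuples

variable {α M : Type*} [Fintype α] [AddCommMonoid M]

theorem sum_pi_fin_succ {k : ℕ} (f : (Fin (k + 1) → α) → M) :
    ∑ w, f w = ∑ a, ∑ w : Fin k → α, f (Fin.cons a w) := by
  rw [← (Fin.consEquiv fun _ => α).sum_comp, Fintype.sum_prod_type]
  rfl

theorem sum_pi_fin_four (f : (Fin 4 → α) → M) :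
    ∑ w, f w = ∑ s, ∑ t, ∑ u, ∑ v, f ![s, t, u, v] := by
  simp only [sum_pi_fin_succ, Fintype.sum_unique]
  rfl

theorem sum_injective_comp [DecidableEq α] {k : ℕ} {τ : Fin k → Fin k} (hτ : Bijective τ)
    (f : (Fin k → α) → M) :
    ∑ w with Injective w, f (w ∘ τ) = ∑ w with Injective w, f w := by
  let e := Equiv.ofBijective τ hτ
  refine sum_nbij' (· ∘ τ) (· ∘ e.symm) ?_ ?_ ?_ ?_ fun _ _ => rfl
  · simp only [mem_filter, mem_univ, true_and]
    exact fun w hw => hw.comp hτ.injective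
  · simp only [mem_filter, mem_univ, true_and]
    exact fun w hw => hw.comp e.symm.injective
  · intro w _
    ext i
    simp [e, Equiv.ofBijective_apply_symm_apply]
  · intro w _
    ext i
    simp [e]

/-- Every injective tuple is, uniquely, a strictly monotone tuple composed with a permutation. -/
theorem sum_strictMono_sum_perm [LinearOrder α] {k : ℕ} (f : (Fin k → α) → M) :
    ∑ w with StrictMono w, ∑ σ : Equiv.Perm (Fin k), f (w ∘ σ) = ∑ w with Injective w, f w := by
  rw [← sum_product']
  refine sum_bij (fun p _ => p.1 ∘ p.2) ?_ ?_ ?_ fun _ _ => rfl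
  · simp only [mem_product, mem_filter, mem_univ, true_and, and_true]
    exact fun p hp => hp.injective.comp p.2.injective
  · simp only [mem_product, mem_filter, mem_univ, true_and, and_true]
    rintro ⟨w, σ⟩ hw ⟨w', σ'⟩ hw' h
    have hrange : Set.range w = Set.range w' := by
      rw [← σ.surjective.range_comp w, ← σ'.surjective.range_comp w']
      exact congrArg Set.range h
    obtain rfl := (hw.range_inj hw').1 hrange
    simp only [Prod.mk.injEq, true_and]
    ext i
    exact congrArg Fin.val (hw.injective (congrFun h i))
  · simp only [mem_product, mem_filter, mem_univ, true_and, and_true, exists_prop, Prod.exists]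
    intro v hv
    refine ⟨v ∘ Tuple.sort v, (Tuple.sort v)⁻¹,
      (Tuple.monotone_sort v).strictMono_of_injective (hv.comp (Tuple.sort v).injective), ?_⟩
    ext i
    simp

theorem injective_vecCons_four [DecidableEq α] {s t u v : α} :
    Injective ![s, t, u, v] ↔
      t ∈ ({s} : Finset α)ᶜ ∧ u ∈ ({s, t} : Finset α)ᶜ ∧ v ∈ ({s, t, u} : Finset α)ᶜ := by
  simp only [Matrix.vecCons, Fin.cons_injective_iff]
  simp [injective_of_subsingleton, eq_comm]
  tauto

theorem sum_injective_fin_four [DecidableEq α] (f : α → α → α → α → M) :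
    ∑ w : Fin 4 → α with Injective w, f (w 0) (w 1) (w 2) (w 3)
      = ∑ s, ∑ t ∈ {s}ᶜ, ∑ u ∈ {s, t}ᶜ, ∑ v ∈ {s, t, u}ᶜ, f s t u v := by
  rw [sum_filter, sum_pi_fin_four]
  simp only [injective_vecCons_four, ite_and, sum_ite_irrel, sum_const_zero, sum_ite_mem,
    univ_inter]
  simp

theorem sum_strictMono_fin_four [LinearOrder α] (f : α → α → α → α → M) :
    ∑ w : Fin 4 → α with StrictMono w, f (w 0) (w 1) (w 2) (w 3)
      = ∑ s, ∑ t, ∑ u, ∑ v, if s < t ∧ t < u ∧ u < v then f s t u v else 0 := by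
  rw [sum_filter, sum_pi_fin_four]
  simp

/-- Expanding `(x₀ - x₁)(x₂ - x₃)` gives four terms, each the right-hand kernel evaluated at a
relabelling of the quadruple. -/
theorem sum_injective_mul_sub_mul_sub [DecidableEq α] {R : Type*} [CommRing R] (x y : α → R) :
    ∑ w : Fin 4 → α with Injective w,
        (x (w 0) - x (w 1)) * (y (w 0) - y (w 1)) * (x (w 2) - x (w 3)) * (y (w 2) - y (w 3))
      = 4 * ∑ w : Fin 4 → α with Injective w,
          x (w 0) * x (w 1) * (y (w 0) - y (w 3)) * (y (w 1) - y (w 2)) := by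
  set k : (Fin 4 → α) → R := fun w =>
    x (w 0) * x (w 1) * (y (w 0) - y (w 3)) * (y (w 1) - y (w 2))
  have hsplit : ∀ w : Fin 4 → α,
      (x (w 0) - x (w 1)) * (y (w 0) - y (w 1)) * (x (w 2) - x (w 3)) * (y (w 2) - y (w 3))
        = k (w ∘ ![0, 2, 3, 1]) + k (w ∘ ![0, 3, 2, 1]) + k (w ∘ ![1, 2, 3, 0])
          + k (w ∘ ![1, 3, 2, 0]) := by
    intro w
    simp only [k, Function.comp_apply, cons_val_zero, cons_val_one, Matrix.cons_val]
    ring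
  simp only [hsplit, sum_add_distrib]
  rw [sum_injective_comp (τ := ![0, 2, 3, 1]) (by decide),
    sum_injective_comp (τ := ![0, 3, 2, 1]) (by decide),
    sum_injective_comp (τ := ![1, 2, 3, 0]) (by decide),
    sum_injective_comp (τ := ![1, 3, 2, 0]) (by decide)]
  ring

end Tuples

section UCentering

variable {n : ℕ}

theorem uCenter_apply_self (A : Matrix (Fin n) (Fin n) ℝ) (s : Fin n) : uCenter A s s = 0 :=
  if_pos rfl

theorem uCenter_apply_of_ne (A : Matrix (Fin n) (Fin n) ℝ) {s t : Fin n} (h : s ≠ t) :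
    uCenter A s t = A s t - (∑ v, A s v) / ((n : ℝ) - 2) - (∑ u, A u t) / ((n : ℝ) - 2)
      + (∑ u, ∑ v, A u v) / (((n : ℝ) - 1) * ((n : ℝ) - 2)) :=
  if_neg h

noncomputable def uCenterₗ : Matrix (Fin n) (Fin n) ℝ →ₗ[ℝ] Matrix (Fin n) (Fin n) ℝ where
  toFun := uCenter
  map_add' A B := by
    ext s t
    by_cases h : s = t
    · simp [h, uCenter_apply_self]
    · simp only [Matrix.add_apply, uCenter_apply_of_ne _ h, sum_add_distrib]
      ring
  map_smul' c A := by
    ext s t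
    by_cases h : s = t
    · simp [h, uCenter_apply_self]
    · simp only [Matrix.smul_apply, uCenter_apply_of_ne _ h, smul_eq_mul, ← mul_sum,
        RingHom.id_apply]
      ring

@[simp]
theorem uCenterₗ_apply (A : Matrix (Fin n) (Fin n) ℝ) : uCenterₗ A = uCenter A := rfl

theorem uCenter_offDiag_add_add_const_eq_zero (hn : 3 ≤ n) (α : Fin n → ℝ) (c : ℝ) :
    uCenter (of fun s t : Fin n => if s = t then 0 else α s + α t + c) = 0 := by
  have h1 : (n : ℝ) - 1 ≠ 0 := sub_ne_zero.2 (by norm_cast; omega)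
  have h2 : (n : ℝ) - 2 ≠ 0 := sub_ne_zero.2 (by norm_cast; omega)
  ext s t
  by_cases h : s = t
  · simp [h, uCenter_apply_self]
  · simp only [uCenter_apply_of_ne _ h, of_apply, if_neg h, sum_ite, filter_eq', filter_ne',
      filter_eq, filter_ne, mem_univ, if_true, sum_const_zero, zero_add, sum_add_distrib,
      sum_erase_eq_sub (mem_univ _), sum_const, card_univ, Fintype.card_fin, nsmul_eq_mul,
      Matrix.zero_apply, sum_sub_distrib, ← mul_sum]
    field_simp
    ring

theorem uCenter_isSymm {A : Matrix (Fin n) (Fin n) ℝ} (hA : A.IsSymm) : (uCenter A).IsSymm := by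
  refine IsSymm.ext fun s t => ?_
  by_cases h : s = t
  · rw [h]
  · rw [uCenter_apply_of_ne _ h, uCenter_apply_of_ne _ (Ne.symm h), hA.apply s t,
      hA.sum_apply_left s, hA.sum_apply_left t]
    ring

theorem sum_uCenter_row_eq_zero {A : Matrix (Fin n) (Fin n) ℝ} (hA : A.IsSymm)
    (hA₀ : ∀ s, A s s = 0) (hn : 3 ≤ n) (s : Fin n) : ∑ t, uCenter A s t = 0 := by
  have h1 : (n : ℝ) - 1 ≠ 0 := sub_ne_zero.2 (by norm_cast; omega)
  have h2 : (n : ℝ) - 2 ≠ 0 := sub_ne_zero.2 (by norm_cast; omega)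
  rw [← add_sum_erase _ _ (mem_univ s), uCenter_apply_self, zero_add,
    sum_congr rfl fun t ht => uCenter_apply_of_ne A (ne_of_mem_erase ht).symm,
    sum_erase_eq_sub (mem_univ s)]
  simp only [sum_add_distrib, sum_sub_distrib, sum_const, card_univ, Fintype.card_fin,
    nsmul_eq_mul, ← sum_div, hA₀, hA.sum_apply_left]
  field_simp
  ring

theorem sum_uCenter_col_eq_zero {A : Matrix (Fin n) (Fin n) ℝ} (hA : A.IsSymm)
    (hA₀ : ∀ s, A s s = 0) (hn : 3 ≤ n) (t : Fin n) : ∑ s, uCenter A s t = 0 := by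
  rw [← sum_uCenter_row_eq_zero hA hA₀ hn t]
  exact sum_congr rfl fun s _ => (uCenter_isSymm hA).apply t s

theorem sum_uCenter_mul_uCenter_eq_sum_mul_uCenter (A : Matrix (Fin n) (Fin n) ℝ)
    {B : Matrix (Fin n) (Fin n) ℝ} (hB : B.IsSymm) (hB₀ : ∀ s, B s s = 0) (hn : 3 ≤ n) :
    ∑ s, ∑ t, uCenter A s t * uCenter B s t = ∑ s, ∑ t, A s t * uCenter B s t := by
  set ρ : Fin n → ℝ := fun s => (∑ v, A s v) / ((n : ℝ) - 2)
  set γ : Fin n → ℝ := fun t => (∑ u, A u t) / ((n : ℝ) - 2)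
  set κ : ℝ := (∑ u, ∑ v, A u v) / (((n : ℝ) - 1) * ((n : ℝ) - 2))
  have hpt : ∀ s t, uCenter A s t * uCenter B s t = (A s t - ρ s - γ t + κ) * uCenter B s t := by
    intro s t
    by_cases h : s = t
    · simp [h, uCenter_apply_self]
    · rw [uCenter_apply_of_ne A h]
  have hrow := sum_uCenter_row_eq_zero hB hB₀ hn
  have hcol := sum_uCenter_col_eq_zero hB hB₀ hn
  simp only [hpt, add_mul, sub_mul, sum_add_distrib, sum_sub_distrib, ← mul_sum, hrow,
    sum_comm (f := fun s t => γ t * uCenter B s t), hcol, mul_zero, sum_const_zero, sub_zero,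
    add_zero]

theorem sum_compl_sum_compl_eq_uCenter {B : Matrix (Fin n) (Fin n) ℝ} (hB : B.IsSymm)
    (hB₀ : ∀ s, B s s = 0) (hn : 3 ≤ n) {s t : Fin n} (hst : s ≠ t) :
    ∑ u ∈ {s, t}ᶜ, ∑ v ∈ {s, t, u}ᶜ, (B s t - B s u - B t v + B u v)
      = ((n : ℝ) - 1) * ((n : ℝ) - 2) * uCenter B s t := by
  have h1 : (n : ℝ) - 1 ≠ 0 := sub_ne_zero.2 (by norm_cast; omega)
  have h2 : (n : ℝ) - 2 ≠ 0 := sub_ne_zero.2 (by norm_cast; omega)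
  rw [sum_congr rfl fun u hu => sum_compl_triple _ hst (by simp at hu; tauto)
      (by simp at hu; tauto), sum_compl_pair _ hst, uCenter_apply_of_ne B hst]
  simp only [sum_add_distrib, sum_sub_distrib, sum_const, card_univ, Fintype.card_fin,
    nsmul_eq_mul, hB₀, hB.sum_apply_left, hB.apply s t, ← mul_sum]
  field_simp
  ring

theorem sum_offDiag_uCenter_mul_eq_sum_distinct (A : Matrix (Fin n) (Fin n) ℝ)
    {B : Matrix (Fin n) (Fin n) ℝ} (hB : B.IsSymm) (hB₀ : ∀ s, B s s = 0) (hn : 3 ≤ n) :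
    ((n : ℝ) - 1) * ((n : ℝ) - 2) *
        ∑ s, ∑ t, (if s ≠ t then uCenter A s t * uCenter B s t else 0)
      = ∑ s, ∑ t ∈ {s}ᶜ, ∑ u ∈ {s, t}ᶜ, ∑ v ∈ {s, t, u}ᶜ,
          A s t * (B s t - B s u - B t v + B u v) := by
  have hdiag : ∀ s t, (if s ≠ t then uCenter A s t * uCenter B s t else 0)
      = uCenter A s t * uCenter B s t := by
    intro s t
    by_cases h : s = t <;> simp [h, uCenter_apply_self]
  simp only [hdiag, sum_uCenter_mul_uCenter_eq_sum_mul_uCenter A hB hB₀ hn, mul_sum]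
  refine sum_congr rfl fun s _ => ?_
  rw [← sum_compl_add_sum {s}, sum_singleton, uCenter_apply_self, mul_zero, mul_zero, add_zero]
  refine sum_congr rfl fun t ht => ?_
  simp only [← mul_sum, sum_compl_sum_compl_eq_uCenter hB hB₀ hn (by simpa [eq_comm] using ht)]
  ring

theorem uInner_eq_of_uCenter_eq {ι κ : Type*} [Fintype ι] [Fintype κ]
    {A B : Matrix (Fin n) (Fin n) ℝ} {A' : ι → Matrix (Fin n) (Fin n) ℝ}
    {B' : κ → Matrix (Fin n) (Fin n) ℝ} {c d : ℝ}
    (hA : uCenter A = c • ∑ i, uCenter (A' i)) (hB : uCenter B = d • ∑ j, uCenter (B' j)) :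
    uInner A B = c * d * ∑ i, ∑ j, uInner (A' i) (B' j) := by
  have hpt : ∀ s t : Fin n, (if s ≠ t then uCenter A s t * uCenter B s t else 0)
      = c * d * ∑ i, ∑ j, if s ≠ t then uCenter (A' i) s t * uCenter (B' j) s t else 0 := by
    intro s t
    split_ifs
    · simp only [hA, hB, Matrix.smul_apply, Matrix.sum_apply, smul_eq_mul, ← sum_mul_sum]
      ring
    · simp
  simp only [uInner, hpt, ← mul_sum, ← sum_div, mul_div_assoc]
  rw [sum_comm_pairs]

end UCentering

section DistanceCovariance

variable {n : ℕ}

noncomputable def offDiagOuter (x : Fin n → ℝ) : Matrix (Fin n) (Fin n) ℝ :=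
  of fun s t => if s = t then 0 else x s * x t

theorem offDiagOuter_isSymm (x : Fin n → ℝ) : (offDiagOuter x).IsSymm :=
  IsSymm.ext fun s t => by simp [offDiagOuter, eq_comm, mul_comm]

theorem offDiagOuter_apply_self (x : Fin n → ℝ) (s : Fin n) : offDiagOuter x s s = 0 := by
  simp [offDiagOuter]

theorem sum_offDiag_uCenter_offDiagOuter_eq_sum_injective (hn : 3 ≤ n) (x y : Fin n → ℝ) :
    ((n : ℝ) - 1) * ((n : ℝ) - 2) * ∑ s, ∑ t,
        (if s ≠ t then uCenter (offDiagOuter x) s t * uCenter (offDiagOuter y) s t else 0)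
      = ∑ w : Fin 4 → Fin n with Injective w,
          x (w 0) * x (w 1) * (y (w 0) - y (w 3)) * (y (w 1) - y (w 2)) := by
  rw [sum_offDiag_uCenter_mul_eq_sum_distinct _ (offDiagOuter_isSymm y)
      (offDiagOuter_apply_self y) hn,
    sum_injective_fin_four fun s t u v => x s * x t * (y s - y v) * (y t - y u)]
  refine sum_congr rfl fun s _ => sum_congr rfl fun t ht => sum_congr rfl fun u hu =>
    sum_congr rfl fun v hv => ?_
  simp only [mem_compl, mem_insert, mem_singleton, not_or] at ht hu hv
  simp only [offDiagOuter, of_apply, Ne.symm ht, Ne.symm hu.1, Ne.symm hv.2.1, Ne.symm hv.2.2,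
    if_false]
  ring

theorem sum_ordered_hKernel_eq_sum_injective (x y : Fin n → ℝ) :
    ∑ s, ∑ t, ∑ u, ∑ v, (if s < t ∧ t < u ∧ u < v then hKernel x y s t u v else 0)
      = 1 / 96 * ∑ w : Fin 4 → Fin n with Injective w,
          (x (w 0) - x (w 1)) * (y (w 0) - y (w 1)) * (x (w 2) - x (w 3))
            * (y (w 2) - y (w 3)) := by
  rw [← sum_strictMono_fin_four (hKernel x y), ← sum_strictMono_sum_perm, mul_sum]
  refine sum_congr rfl fun w _ => ?_
  have hw : ![w 0, w 1, w 2, w 3] = w := by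
    ext i
    fin_cases i <;> rfl
  simp only [hKernel, hw, Function.comp_apply, mul_sum]
  refine sum_congr rfl fun σ _ => ?_
  push_cast [Nat.factorial]
  ring

theorem uInner_offDiagOuter_eq_covnSq (hn : 4 ≤ n) (x y : Fin n → ℝ) :
    uInner (offDiagOuter x) (offDiagOuter y) = covnSq x y := by
  have h0 : (n : ℝ) ≠ 0 := by positivity
  have h1 : (n : ℝ) - 1 ≠ 0 := sub_ne_zero.2 (by norm_cast; omega)
  have h2 : (n : ℝ) - 2 ≠ 0 := sub_ne_zero.2 (by norm_cast; omega)
  have h3 : (n : ℝ) - 3 ≠ 0 := sub_ne_zero.2 (by norm_cast; omega)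
  rw [uInner, covnSq, sum_ordered_hKernel_eq_sum_injective, sum_injective_mul_sub_mul_sub,
    ← sum_offDiag_uCenter_offDiagOuter_eq_sum_injective (by omega), cast_choose_four]
  field_simp
  ring

theorem uCenter_eq_smul_sum_uCenter_offDiagOuter {p : ℕ} (hn : 3 ≤ n)
    (X : Fin n → EuclideanSpace ℝ (Fin p)) {τ : ℝ} (hτ : τ ≠ 0) {L : Matrix (Fin n) (Fin n) ℝ}
    (hL : ∀ s t, L s t = if s = t then 0 else (‖X s - X t‖ ^ 2 - τ ^ 2) / τ ^ 2) :
    uCenter L = (-2 / τ ^ 2) • ∑ i, uCenter (offDiagOuter fun s => X s i) := by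
  have hsplit : L = of (fun s t => if s = t then 0 else ‖X s‖ ^ 2 / τ ^ 2 + ‖X t‖ ^ 2 / τ ^ 2 + -1)
      + (-2 / τ ^ 2) • ∑ i, offDiagOuter fun s => X s i := by
    ext s t
    by_cases h : s = t
    · simp [hL, h, Matrix.sum_apply, offDiagOuter_apply_self]
    · simp only [hL, h, if_false, norm_sub_sq_real, PiLp.inner_apply, RCLike.inner_apply,
        Real.ringHom_apply, mul_comm, offDiagOuter, Matrix.add_apply, of_apply, Matrix.smul_apply,
        Matrix.sum_apply, smul_eq_mul]
      field_simp
      ring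
  rw [hsplit, ← uCenterₗ_apply, map_add, map_smul, map_sum]
  simp [uCenter_offDiag_add_add_const_eq_zero hn]

end DistanceCovariance

theorem quarter_uInner_eq_sum_covnSq_general (n p q : ℕ) (hn : 4 ≤ n)
    (X : Fin n → EuclideanSpace ℝ (Fin p)) (Y : Fin n → EuclideanSpace ℝ (Fin q))
    (τX τY τ : ℝ) (hτX : 0 < τX) (hτY : 0 < τY) (hτ : τ = τX * τY)
    (LX : Matrix (Fin n) (Fin n) ℝ) (LY : Matrix (Fin n) (Fin n) ℝ)
    (hLX : ∀ s t, LX s t = if s = t then 0 else (‖X s - X t‖ ^ 2 - τX ^ 2) / τX ^ 2)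
    (hLY : ∀ s t, LY s t = if s = t then 0 else (‖Y s - Y t‖ ^ 2 - τY ^ 2) / τY ^ 2) :
    (1 / 4 : ℝ) * uInner LX LY =
      (1 / τ ^ 2) * ∑ i : Fin p, ∑ j : Fin q,
        covnSq (fun s => X s i) (fun s => Y s j) := by
  rw [uInner_eq_of_uCenter_eq
      (uCenter_eq_smul_sum_uCenter_offDiagOuter (by omega) X hτX.ne' hLX)
      (uCenter_eq_smul_sum_uCenter_offDiagOuter (by omega) Y hτY.ne' hLY)]
  simp only [uInner_offDiagOuter_eq_covnSq hn, hτ]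
  field_simp
  ring

/-- **Lemma 1 of the paper.** For the `𝒰`-centered matrices `L_X`, `L_Y` built
from `(‖X_s−X_t‖² − τ_X²)/τ_X²` and `(‖Y_s−Y_t‖² − τ_Y²)/τ_Y²`, one has
`(1/4)·(L̃_X·L̃_Y) = (1/τ²)·Σ_{i,j} cov_n²(𝒳_i, 𝒴_j)`. -/
theorem quarter_uInner_eq_sum_covnSq (n p q : ℕ) (hn : 4 ≤ n) (hp : 1 ≤ p) (hq : 1 ≤ q)
    (X : Fin n → EuclideanSpace ℝ (Fin p)) (Y : Fin n → EuclideanSpace ℝ (Fin q))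
    (τX τY τ : ℝ) (hτX : 0 < τX) (hτY : 0 < τY) (hτ : τ = τX * τY)
    (LX : Matrix (Fin n) (Fin n) ℝ) (LY : Matrix (Fin n) (Fin n) ℝ)
    (hLX : ∀ s t, LX s t = if s = t then 0 else (‖X s - X t‖ ^ 2 - τX ^ 2) / τX ^ 2)
    (hLY : ∀ s t, LY s t = if s = t then 0 else (‖Y s - Y t‖ ^ 2 - τY ^ 2) / τY ^ 2) :
    (1 / 4 : ℝ) * uInner LX LY =
      (1 / τ ^ 2) * ∑ i : Fin p, ∑ j : Fin q,
        covnSq (fun s => X s i) (fun s => Y s j) :=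
  quarter_uInner_eq_sum_covnSq_general n p q hn X Y τX τY τ hτX hτY hτ LX LY hLX hLY
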